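/- arXiv:2601.18657 — 3 statements merged into one kernel-verified Lean document; each statement's English description precedes it below -/
import Mathlib

section
/- For integers k ≥ 2 and n > k-1, D_k(n) + D_{k-1}(n) = D_{k-1}(n-k+1) + 2·A(n), where D_j(m) counts partitions of m into non-negative parts whose smallest part occurs exactly j times with all other parts distinct, and A(m) counts partitions of m into distinct positive parts. -/
/-!
For `j ≥ 1` a partition counted by `D_j(m)` is determined by its smallest part `s` and the set `N`
of its other parts, all larger than `s`, subject to `j * s + ∑ N = m`. Those with `s = 0` are the
partitions of `m` into distinct positive parts padded with `j` zeros, so `D_j(n) = A(n) + P_j(n)`,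
where `P_j(n)` counts the pairs with `s ≥ 1`.

For a pair `(t, N)` counted by `D_{k-1}(n-k+1)`, raise `t` to `t + 1`: if `t + 1 ∉ N` this is a
pair counted by `P_{k-1}(n)`, and if `t + 1 ∈ N`, moving `t + 1` out of `N` to the smallest parts
gives a pair counted by `P_k(n)`. Hence `D_{k-1}(n-k+1) = P_k(n) + P_{k-1}(n)`.
-/

/-- `Dcount j m` is the number of partitions of `m` into non-negative parts
(multisets of natural numbers, `0` allowed, summing to `m`) whose smallest part
occurs exactly `j` times with all other parts occurring exactly once.
(With this definition `Dcount j 0 = 1`, realized by `j` copies of `0`.) -/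
noncomputable def Dcount (j m : ℕ) : ℕ :=
  Set.ncard {M : Multiset ℕ | M.sum = m ∧
    ∃ s ∈ M, (∀ x ∈ M, s ≤ x) ∧ M.count s = j ∧
      ∀ x ∈ M, x ≠ s → M.count x = 1}

def dPairs (j m : ℕ) : Set (ℕ × Finset ℕ) :=
  {p | (∀ x ∈ p.2, p.1 < x) ∧ j * p.1 + ∑ x ∈ p.2, x = m}

theorem finite_dPairs {j : ℕ} (hj : j ≠ 0) (m : ℕ) : (dPairs j m).Finite := by
  refine ((Set.finite_Iic m).prod (Finset.range (m + 1)).powerset.finite_toSet).subset ?_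
  rintro ⟨s, N⟩ ⟨-, hsum : j * s + ∑ x ∈ N, x = m⟩
  have hs : s ≤ j * s := Nat.le_mul_of_pos_left s (Nat.pos_of_ne_zero hj)
  refine ⟨show s ≤ m by omega, ?_⟩
  simp only [Finset.coe_powerset, Set.mem_preimage, Set.mem_powerset_iff, Finset.coe_subset]
  intro x hx
  have := Finset.single_le_sum (fun i _ => Nat.zero_le i) hx
  simp only [Finset.mem_range]
  omega

def toParts (j : ℕ) (p : ℕ × Finset ℕ) : Multiset ℕ :=
  Multiset.replicate j p.1 + p.2.val

section toParts

variable {j : ℕ} {p : ℕ × Finset ℕ}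

theorem sum_toParts : (toParts j p).sum = j * p.1 + ∑ x ∈ p.2, x := by
  simp [toParts, Finset.sum_val]

theorem fst_mem_toParts (hj : j ≠ 0) : p.1 ∈ toParts j p :=
  Multiset.mem_add.mpr (Or.inl (Multiset.mem_replicate.mpr ⟨hj, rfl⟩))

theorem fst_le_of_mem_toParts (hp : ∀ x ∈ p.2, p.1 < x) {x : ℕ} (hx : x ∈ toParts j p) :
    p.1 ≤ x := by
  rcases Multiset.mem_add.mp hx with h | h
  · exact (Multiset.eq_of_mem_replicate h).ge
  · exact (hp x h).le

theorem count_toParts_fst (hp : ∀ x ∈ p.2, p.1 < x) : (toParts j p).count p.1 = j := by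
  have : p.1 ∉ p.2 := fun h => (hp _ h).false
  simp [toParts, Multiset.count_replicate_self, this]

theorem count_toParts_of_ne {x : ℕ} (hx : x ∈ toParts j p) (hxp : x ≠ p.1) :
    (toParts j p).count x = 1 := by
  have hx2 : x ∈ p.2 := by simpa [toParts, Multiset.mem_replicate, hxp] using hx
  simp [toParts, Multiset.count_replicate, Ne.symm hxp,
    Multiset.count_eq_one_of_mem p.2.nodup hx2]

theorem toParts_injOn (hj : j ≠ 0) : Set.InjOn (toParts j) {p | ∀ x ∈ p.2, p.1 < x} := by
  rintro ⟨s, N⟩ hp ⟨t, N'⟩ hq h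
  have hst : s = t := le_antisymm
    (fst_le_of_mem_toParts hp (h ▸ fst_mem_toParts (p := (t, N')) hj))
    (fst_le_of_mem_toParts hq (h ▸ fst_mem_toParts (p := (s, N)) hj))
  subst hst
  simpa [toParts] using h

end toParts

theorem Dcount_eq_ncard_dPairs {j m : ℕ} (hj : j ≠ 0) : Dcount j m = (dPairs j m).ncard := by
  refine (Set.ncard_congr (fun p _ => toParts j p) ?_ ?_ ?_).symm
  · rintro p ⟨hp, hsum⟩
    exact ⟨sum_toParts.trans hsum, p.1, fst_mem_toParts hj,
      fun x hx => fst_le_of_mem_toParts hp hx, count_toParts_fst hp,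
      fun x hx hxp => count_toParts_of_ne hx hxp⟩
  · exact fun p q hp hq => toParts_injOn hj hp.1 hq.1
  · rintro M ⟨hsum, s, hs, hmin, hcount, hone⟩
    have hnodup : (M.filter (· ≠ s)).Nodup :=
      Multiset.nodup_iff_count_le_one.mpr fun x => by
        rw [Multiset.count_filter]
        split_ifs with hx
        · by_cases hxM : x ∈ M
          · exact (hone x hxM hx).le
          · simp [Multiset.count_eq_zero_of_notMem hxM]
        · exact Nat.zero_le _
    have hM : toParts j (s, (M.filter (· ≠ s)).toFinset) = M := by
      rw [toParts, Multiset.toFinset_val, hnodup.dedup, ← hcount, ← Multiset.filter_eq']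
      exact Multiset.filter_add_not _ M
    refine ⟨_, ⟨fun x hx => ?_, ?_⟩, hM⟩
    · simp only [Multiset.mem_toFinset, Multiset.mem_filter] at hx
      exact lt_of_le_of_ne (hmin x hx.1) (Ne.symm hx.2)
    · rw [← sum_toParts, hM, hsum]

theorem ncard_dPairs_fst_eq_zero (j m : ℕ) :
    {p ∈ dPairs j m | p.1 = 0}.ncard = (Nat.Partition.distincts m).card := by
  rw [← Set.ncard_coe_finset]
  refine (Set.ncard_congr (fun q _ => ((0 : ℕ), q.parts.toFinset)) ?_ ?_ ?_).symm
  · intro q hq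
    have hnd : q.parts.Nodup := (Finset.mem_filter.mp hq).2
    refine ⟨⟨fun x hx => q.parts_pos (Multiset.mem_toFinset.mp hx), ?_⟩, rfl⟩
    rw [mul_zero, zero_add, Finset.sum_eq_multiset_sum, Multiset.toFinset_val, hnd.dedup,
      Multiset.map_id', q.parts_sum]
  · intro q q' hq hq' h
    exact Nat.Partition.ext <| ((Finset.mem_filter.mp hq).2.toFinset_inj
      (Finset.mem_filter.mp hq').2) (congrArg Prod.snd h)
  · rintro ⟨s, N⟩ ⟨⟨hN, hsum⟩, rfl : s = 0⟩
    refine ⟨⟨N.val, fun hx => hN _ hx, by simpa [Finset.sum_val] using hsum⟩,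
      Finset.mem_filter.mpr ⟨Finset.mem_univ _, N.nodup⟩, ?_⟩
    simp

theorem ncard_dPairs_succ_mem (c m : ℕ) :
    {p ∈ dPairs c m | p.1 + 1 ∈ p.2}.ncard =
      {p ∈ dPairs (c + 1) (m + c) | p.1 ≠ 0}.ncard := by
  refine Set.ncard_congr (fun p _ => (p.1 + 1, p.2.erase (p.1 + 1))) ?_ ?_ ?_
  · rintro ⟨t, N⟩ ⟨⟨hN, hsum⟩, hmem⟩
    refine ⟨⟨fun x hx => ?_, ?_⟩, t.succ_ne_zero⟩
    · obtain ⟨hxt, hx⟩ := Finset.mem_erase.mp hx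
      exact lt_of_le_of_ne (hN x hx) hxt.symm
    · have := Finset.sum_erase_add N id hmem
      simp only [id] at this hsum ⊢
      linarith
  · rintro ⟨t, N⟩ ⟨t', N'⟩ ⟨-, ht⟩ ⟨-, ht'⟩ h
    obtain ⟨htt', hNN'⟩ := Prod.mk.inj h
    obtain rfl : t = t' := Nat.succ_injective htt'
    exact congrArg _ (Finset.erase_injOn' (t + 1) ht ht' hNN')
  · rintro ⟨s, N⟩ ⟨⟨hN, hsum⟩, hs⟩
    obtain ⟨u, rfl⟩ := Nat.exists_eq_succ_of_ne_zero hs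
    have hu : u + 1 ∉ N := fun h => (hN _ h).false
    refine ⟨(u, insert (u + 1) N),
      ⟨⟨fun x hx => ?_, ?_⟩, Finset.mem_insert_self _ _⟩, ?_⟩
    · rcases Finset.mem_insert.mp hx with rfl | hx
      · exact u.lt_succ_self
      · exact u.lt_succ_self.trans (hN x hx)
    · rw [Finset.sum_insert hu]
      simp only at hsum ⊢
      linarith
    · simp [Finset.erase_insert hu]

theorem ncard_dPairs_succ_notMem (c m : ℕ) :
    {p ∈ dPairs c m | p.1 + 1 ∉ p.2}.ncard = {p ∈ dPairs c (m + c) | p.1 ≠ 0}.ncard := by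
  refine Set.ncard_congr (fun p _ => (p.1 + 1, p.2)) ?_ ?_ ?_
  · rintro ⟨t, N⟩ ⟨⟨hN, hsum⟩, hmem⟩
    have hN' : ∀ x ∈ N, t + 1 < x := fun x hx =>
      lt_of_le_of_ne (hN x hx) (by rintro rfl; exact hmem hx)
    refine ⟨⟨hN', ?_⟩, t.succ_ne_zero⟩
    simp only at hsum ⊢
    linarith
  · rintro ⟨t, N⟩ ⟨t', N'⟩ - - h
    simpa using h
  · rintro ⟨s, N⟩ ⟨⟨hN, hsum⟩, hs⟩
    obtain ⟨u, rfl⟩ := Nat.exists_eq_succ_of_ne_zero hs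
    refine ⟨(u, N),
      ⟨⟨fun x hx => u.lt_succ_self.trans (hN x hx), ?_⟩, fun h => (hN _ h).false⟩, rfl⟩
    simp only at hsum ⊢
    linarith

theorem ncard_dPairs {j : ℕ} (hj : j ≠ 0) (m : ℕ) :
    (dPairs j m).ncard =
      (Nat.Partition.distincts m).card + {p ∈ dPairs j m | p.1 ≠ 0}.ncard := by
  rw [← ncard_dPairs_fst_eq_zero j m]
  exact (Set.ncard_inter_add_ncard_sdiff_eq_ncard _ {p | p.1 = 0} (finite_dPairs hj m)).symm

theorem ncard_dPairs_eq_add {c : ℕ} (hc : c ≠ 0) (m : ℕ) :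
    (dPairs c m).ncard =
      {p ∈ dPairs (c + 1) (m + c) | p.1 ≠ 0}.ncard +
        {p ∈ dPairs c (m + c) | p.1 ≠ 0}.ncard := by
  rw [← ncard_dPairs_succ_mem, ← ncard_dPairs_succ_notMem]
  exact (Set.ncard_inter_add_ncard_sdiff_eq_ncard _ {p | p.1 + 1 ∈ p.2}
    (finite_dPairs hc m)).symm

/-- For `k ≥ 2` and `n > k-1`,
`D_k(n) + D_{k-1}(n) = D_{k-1}(n-k+1) + 2·A(n)`,
where `A(n)` counts partitions of `n` into distinct positive parts. -/
theorem D_add_D (k n : ℕ) (hk : 2 ≤ k) (hn : k - 1 < n) :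
    Dcount k n + Dcount (k - 1) n =
      Dcount (k - 1) (n - k + 1) + 2 * (Nat.Partition.distincts n).card := by
  obtain ⟨c, rfl⟩ : ∃ c, k = c + 1 := ⟨k - 1, by omega⟩
  obtain ⟨m, rfl⟩ : ∃ m, n = m + c := ⟨n - c, by omega⟩
  have hc : c ≠ 0 := by omega
  rw [Nat.add_sub_cancel, show m + c - (c + 1) + 1 = m by omega]
  simp only [Dcount_eq_ncard_dPairs hc, Dcount_eq_ncard_dPairs c.succ_ne_zero]
  rw [ncard_dPairs_eq_add hc m, ncard_dPairs c.succ_ne_zero, ncard_dPairs hc (m + c)]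
  ring
end

section
/- For all n ≥ 4, D_3(n) = 2·A(n-3) - 2·A(n-1) + 2·A(n), where D_3(n) counts partitions of n into non-negative parts whose smallest part appears exactly three times with all other parts distinct, and A(m) counts partitions of m into distinct positive parts. -/
open Finset

section Telescoping

variable {Q : ℕ → ℤ → ℤ}

theorem sum_range_sub_succ_mul_succ
    (hrec : ∀ t m, Q t m = Q (t + 1) m + Q (t + 1) (m - (t + 1))) (j n : ℤ) (N : ℕ) :
    ∑ i ∈ range (N + 1), Q (i + 1) (n - (j + 1) * (i + 1)) =
      Q 0 (n - j) + ∑ i ∈ range N, Q (i + 1) (n - j - j * (i + 1)) -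
        ∑ i ∈ range (N + 1), Q (i + 1) (n - j * (i + 1)) := by
  have hterm : ∀ i : ℕ, Q (i + 1) (n - (j + 1) * (i + 1)) =
      Q i (n - j * (i + 1)) - Q (i + 1) (n - j * (i + 1)) := by
    intro i
    rw [hrec i (n - j * (i + 1)), show n - j * (i + 1) - (i + 1) = n - (j + 1) * (i + 1) by ring]
    ring
  have hshift : ∀ i : ℕ, n - j * ((i : ℤ) + 1 + 1) = n - j - j * (i + 1) := fun i => by ring
  simp only [hterm, sum_sub_distrib, sum_range_succ' (fun i => Q i (n - j * (i + 1)))]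
  push_cast
  simp only [hshift, mul_one]
  ring

theorem sum_range_sub_succ
    (hrec : ∀ t m, Q t m = Q (t + 1) m + Q (t + 1) (m - (t + 1)))
    (hsmall : ∀ (t : ℕ) (m : ℤ), 0 < m → m ≤ t → Q t m = 0)
    {n : ℤ} {N : ℕ} (hn : 1 ≤ n) (hN : n ≤ N) :
    ∑ i ∈ range N, Q (i + 1) (n - (i + 1)) = Q 0 n := by
  obtain ⟨M, rfl⟩ : ∃ M, N = M + 1 := ⟨N - 1, by omega⟩
  have h := sum_range_sub_succ_mul_succ hrec 0 n M
  simp only [zero_add, one_mul, zero_mul, sub_zero, sum_range_succ (fun i => Q (i + 1) n)] at h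
  rw [h, hsmall (M + 1) n (by omega) (by push_cast at hN; omega)]
  ring

theorem sum_range_sub_two_mul_succ
    (hrec : ∀ t m, Q t m = Q (t + 1) m + Q (t + 1) (m - (t + 1)))
    (hsmall : ∀ (t : ℕ) (m : ℤ), 0 < m → m ≤ t → Q t m = 0)
    {n : ℤ} {N : ℕ} (hn : 2 ≤ n) (hN : n ≤ N) :
    ∑ i ∈ range N, Q (i + 1) (n - 2 * (i + 1)) = 2 * Q 0 (n - 1) - Q 0 n := by
  obtain ⟨M, rfl⟩ : ∃ M, N = M + 1 := ⟨N - 1, by omega⟩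
  have h := sum_range_sub_succ_mul_succ hrec 1 n M
  norm_num at h
  rw [h, sum_range_sub_succ hrec hsmall (by omega) (by push_cast at hN; omega),
    sum_range_sub_succ hrec hsmall (by omega) hN]
  ring

theorem sum_range_sub_three_mul_succ
    (hrec : ∀ t m, Q t m = Q (t + 1) m + Q (t + 1) (m - (t + 1)))
    (hsmall : ∀ (t : ℕ) (m : ℤ), 0 < m → m ≤ t → Q t m = 0)
    {n : ℤ} {N : ℕ} (hn : 4 ≤ n) (hN : n ≤ N) :
    ∑ i ∈ range N, Q (i + 1) (n - 3 * (i + 1)) =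
      2 * Q 0 (n - 3) - 2 * Q 0 (n - 1) + Q 0 n := by
  obtain ⟨M, rfl⟩ : ∃ M, N = M + 1 := ⟨N - 1, by omega⟩
  have h := sum_range_sub_succ_mul_succ hrec 2 n M
  norm_num at h
  rw [h, sum_range_sub_two_mul_succ hrec hsmall (by omega) (by push_cast at hN; omega),
    sum_range_sub_two_mul_succ hrec hsmall (by omega) hN, show n - 2 - 1 = n - 3 by ring]
  ring

end Telescoping

-- The condition `(M.sum : ℤ) = m` makes this empty for `m < 0`.
def distinctsGT (t : ℕ) (m : ℤ) : Finset (Multiset ℕ) :=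
  ((Nat.Partition.distincts m.toNat).map
    ⟨Nat.Partition.parts, fun _ _ => Nat.Partition.ext⟩).filter
    fun M => (M.sum : ℤ) = m ∧ ∀ i ∈ M, t < i

theorem mem_distinctsGT {t : ℕ} {m : ℤ} {M : Multiset ℕ} :
    M ∈ distinctsGT t m ↔ M.Nodup ∧ (M.sum : ℤ) = m ∧ ∀ i ∈ M, t < i := by
  simp only [distinctsGT, Nat.Partition.distincts, mem_filter, mem_map, mem_univ, true_and]
  constructor
  · rintro ⟨⟨p, hp, rfl⟩, hsum, hgt⟩
    exact ⟨hp, hsum, hgt⟩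
  · rintro ⟨hnd, hsum, hgt⟩
    exact ⟨⟨⟨M, fun hi => Nat.zero_lt_of_lt (hgt _ hi), by omega⟩, hnd, rfl⟩, hsum, hgt⟩

theorem card_distinctsGT_zero (m : ℕ) :
    (distinctsGT 0 m).card = (Nat.Partition.distincts m).card := by
  rw [distinctsGT, filter_true_of_mem, card_map, Int.toNat_natCast]
  intro M hM
  obtain ⟨p, -, rfl⟩ := mem_map.1 hM
  refine ⟨?_, fun _ => p.parts_pos⟩
  simp [p.parts_sum]

theorem distinctsGT_eq_empty {t : ℕ} {m : ℤ} (hm : 0 < m) (hmt : m ≤ t) :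
    distinctsGT t m = ∅ := by
  refine eq_empty_of_forall_notMem fun M hM => ?_
  obtain ⟨-, hsum, hgt⟩ := mem_distinctsGT.1 hM
  have hM0 : M ≠ 0 := by
    rintro rfl
    simp only [Multiset.sum_zero, Nat.cast_zero] at hsum
    omega
  obtain ⟨i, hi⟩ := Multiset.exists_mem_of_ne_zero hM0
  have := Multiset.le_sum_of_mem hi
  have := hgt i hi
  omega

theorem filter_notMem_distinctsGT (t : ℕ) (m : ℤ) :
    (distinctsGT t m).filter (t + 1 ∉ ·) = distinctsGT (t + 1) m := by
  ext M
  simp only [mem_filter, mem_distinctsGT]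
  constructor
  · rintro ⟨⟨hnd, hsum, hgt⟩, hnot⟩
    exact ⟨hnd, hsum, fun i hi => lt_of_le_of_ne (hgt i hi) (by rintro rfl; exact hnot hi)⟩
  · rintro ⟨hnd, hsum, hgt⟩
    exact ⟨⟨hnd, hsum, fun i hi => (hgt i hi).trans' t.lt_succ_self⟩,
      fun h => (hgt _ h).false⟩

theorem card_filter_mem_distinctsGT (t : ℕ) (m : ℤ) :
    ((distinctsGT t m).filter (t + 1 ∈ ·)).card = (distinctsGT (t + 1) (m - (t + 1))).card := by
  refine card_nbij' (·.erase (t + 1)) ((t + 1) ::ₘ ·) ?_ ?_ ?_ ?_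
  · intro M hM
    rw [mem_coe, mem_filter, mem_distinctsGT] at hM
    rw [mem_coe, mem_distinctsGT]
    dsimp only
    obtain ⟨⟨hnd, hsum, hgt⟩, hmem⟩ := hM
    refine ⟨hnd.erase _, ?_, fun i hi => ?_⟩
    · have := Multiset.sum_erase hmem
      omega
    · obtain ⟨hne, hi⟩ := hnd.mem_erase_iff.1 hi
      exact lt_of_le_of_ne (hgt i hi) (Ne.symm hne)
  · intro M hM
    rw [mem_coe, mem_distinctsGT] at hM
    rw [mem_coe, mem_filter, mem_distinctsGT]
    obtain ⟨hnd, hsum, hgt⟩ := hM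
    refine ⟨⟨Multiset.nodup_cons.2 ⟨fun h => (hgt _ h).false, hnd⟩, ?_, fun i hi => ?_⟩,
      Multiset.mem_cons_self _ _⟩
    · rw [Multiset.sum_cons, Nat.cast_add, hsum]
      push_cast
      ring
    · rcases Multiset.mem_cons.1 hi with rfl | hi
      · exact t.lt_succ_self
      · exact (hgt i hi).trans' t.lt_succ_self
  · intro M hM
    exact Multiset.cons_erase (mem_filter.1 hM).2
  · intro M _
    exact Multiset.erase_cons_head _ _

theorem card_distinctsGT (t : ℕ) (m : ℤ) :
    (distinctsGT t m).card =
      (distinctsGT (t + 1) m).card + (distinctsGT (t + 1) (m - (t + 1))).card := by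
  rw [← filter_notMem_distinctsGT, ← card_filter_mem_distinctsGT, add_comm,
    card_filter_add_card_filter_not]

namespace Multiset

theorem le_of_mem_replicate_add {j k x : ℕ} {R : Multiset ℕ} (hR : ∀ i ∈ R, k < i)
    (hx : x ∈ replicate j k + R) : k ≤ x := by
  rcases mem_add.1 hx with hx | hx
  · exact (eq_of_mem_replicate hx).ge
  · exact (hR x hx).le

theorem eq_and_eq_of_replicate_add_eq {j k k' : ℕ} {R R' : Multiset ℕ} (hj : j ≠ 0)
    (hR : ∀ i ∈ R, k < i) (hR' : ∀ i ∈ R', k' < i)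
    (h : replicate j k + R = replicate j k' + R') : k = k' ∧ R = R' := by
  have hmem : ∀ {l : ℕ} {S : Multiset ℕ}, l ∈ replicate j l + S :=
    mem_add.2 (Or.inl (mem_replicate.2 ⟨hj, rfl⟩))
  have hkk : k = k' :=
    le_antisymm (le_of_mem_replicate_add hR (h.symm ▸ hmem))
      (le_of_mem_replicate_add hR' (h ▸ hmem))
  subst hkk
  exact ⟨rfl, add_left_cancel h⟩

theorem exists_min_count_iff_eq_replicate_add {j : ℕ} (hj : j ≠ 0) {M : Multiset ℕ} :
    (∃ s ∈ M, (∀ x ∈ M, s ≤ x) ∧ M.count s = j ∧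
        ∀ x ∈ M, x ≠ s → M.count x = 1) ↔
      ∃ k R, R.Nodup ∧ (∀ i ∈ R, k < i) ∧ M = replicate j k + R := by
  constructor
  · rintro ⟨s, -, hmin, hcount, hone⟩
    refine ⟨s, M.filter (· ≠ s), nodup_iff_count_le_one.2 fun x => ?_, fun i hi => ?_, ?_⟩
    · rw [count_filter]
      split_ifs with hxs
      · by_cases hx : x ∈ M
        · exact (hone x hx hxs).le
        · exact (count_eq_zero.2 hx).trans_le zero_le_one
      · exact zero_le_one
    · obtain ⟨hi, his⟩ := mem_filter.1 hi
      exact lt_of_le_of_ne (hmin i hi) his.symm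
    · rw [← hcount, ← filter_eq', filter_add_not]
  · rintro ⟨k, R, hnd, hgt, rfl⟩
    have hk : k ∉ R := fun h => (hgt k h).false
    refine ⟨k, mem_add.2 (Or.inl (mem_replicate.2 ⟨hj, rfl⟩)),
      fun x => le_of_mem_replicate_add hgt, by simp [count_eq_zero.2 hk], fun x hx hxk => ?_⟩
    have hxR : x ∈ R := (mem_add.1 hx).resolve_left fun h => hxk (eq_of_mem_replicate h)
    rw [count_add, count_replicate, if_neg (Ne.symm hxk), zero_add, count_eq_one_of_mem hnd hxR]

end Multiset

theorem Dcount_eq_sum_card_distinctsGT {j n N : ℕ} (hj : j ≠ 0) (hN : n < j * N) :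
    Dcount j n = ∑ k ∈ range N, (distinctsGT k (n - j * k)).card := by
  have hinj : Set.InjOn (fun x : (_ : ℕ) × Multiset ℕ => Multiset.replicate j x.1 + x.2)
      ((range N).sigma fun k => distinctsGT k (n - j * k)) := by
    rintro ⟨k, R⟩ hR ⟨k', R'⟩ hR' h
    simp only [coe_sigma, Set.mem_sigma_iff, mem_coe, mem_distinctsGT] at hR hR'
    obtain ⟨rfl, rfl⟩ := Multiset.eq_and_eq_of_replicate_add_eq hj hR.2.2.2 hR'.2.2.2 h
    rfl
  rw [← card_sigma, ← card_image_of_injOn hinj, ← Set.ncard_coe_finset, Dcount]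
  congr 1
  ext M
  simp only [Set.mem_ofPred_eq, coe_image, Set.mem_image, mem_coe, mem_sigma, mem_range,
    mem_distinctsGT, Multiset.exists_min_count_iff_eq_replicate_add hj, Sigma.exists]
  constructor
  · rintro ⟨hsum, k, R, hnd, hgt, rfl⟩
    rw [Multiset.sum_add, Multiset.sum_replicate, smul_eq_mul] at hsum
    refine ⟨k, R, ⟨?_, hnd, ?_, hgt⟩, rfl⟩
    · exact Nat.lt_of_mul_lt_mul_left (a := j) (by omega)
    · omega
  · rintro ⟨k, R, ⟨-, hnd, hsum, hgt⟩, rfl⟩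
    refine ⟨?_, k, R, hnd, hgt, rfl⟩
    rw [Multiset.sum_add, Multiset.sum_replicate, smul_eq_mul]
    omega

/-- For `n ≥ 4`, `D_3(n) = 2·A(n-3) - 2·A(n-1) + 2·A(n)`, where `A(m)` counts
partitions of `m` into distinct positive parts. -/
theorem D3_eq (n : ℕ) (hn : 4 ≤ n) :
    (Dcount 3 n : ℤ) =
      2 * (Nat.Partition.distincts (n - 3)).card -
        2 * (Nat.Partition.distincts (n - 1)).card +
        2 * (Nat.Partition.distincts n).card := by
  set Q : ℕ → ℤ → ℤ := fun t m => ((distinctsGT t m).card : ℤ) with hQ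
  have hrec : ∀ t m, Q t m = Q (t + 1) m + Q (t + 1) (m - (t + 1)) := fun t m => by
    simp only [hQ, card_distinctsGT t m, Nat.cast_add]
  have hsmall : ∀ (t : ℕ) (m : ℤ), 0 < m → m ≤ t → Q t m = 0 := fun t m hm hmt => by
    simp only [hQ, distinctsGT_eq_empty hm hmt, card_empty, Nat.cast_zero]
  have hQ0 : ∀ m : ℕ, Q 0 m = (Nat.Partition.distincts m).card := fun m => by
    simp only [hQ, card_distinctsGT_zero]
  have hsum := sum_range_sub_three_mul_succ hrec hsmall (n := n) (N := n) (by omega) le_rfl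
  rw [show (n : ℤ) - 3 = ((n - 3 : ℕ) : ℤ) by omega,
    show (n : ℤ) - 1 = ((n - 1 : ℕ) : ℤ) by omega, hQ0, hQ0, hQ0] at hsum
  rw [Dcount_eq_sum_card_distinctsGT (N := n + 1) three_ne_zero (by omega), Nat.cast_sum,
    sum_range_succ']
  push_cast
  change ∑ i ∈ range n, Q (i + 1) (n - 3 * (i + 1)) + Q 0 (n - 0) = _
  rw [hsum, sub_zero, hQ0]
  ring
end

section
/- Legendre's theorem: for every positive integer n, the number of partitions of n into an even number of distinct parts minus the number of partitions of n into an odd number of distinct parts equals (-1)^m if n = m(3m±1)/2 for some positive integer m, and equals 0 otherwise. -/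
/-!
Weighting a partition into distinct parts by `(-1) ^ (number of parts)`, the generating function
becomes `∏ k ≥ 1, (1 - X ^ k)`: each part `k` is used at most once and contributes `-X ^ k`.
Euler's pentagonal number theorem expands this product as
`∑ k : ℤ, (-1) ^ k X ^ (k (3k - 1) / 2)`, and comparing the coefficients of `X ^ n` gives the
theorem.
-/

/-- `PE n`: the number of partitions of `n` into an even number of distinct
positive parts. -/
noncomputable def PE (n : ℕ) : ℕ :=
  Set.ncard {p : Nat.Partition n | p.parts.Nodup ∧ Even p.parts.card}

/-- `PO n`: the number of partitions of `n` into an odd number of distinct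
positive parts. -/
noncomputable def PO (n : ℕ) : ℕ :=
  Set.ncard {p : Nat.Partition n | p.parts.Nodup ∧ Odd p.parts.card}

open PowerSeries Finset
open scoped PowerSeries.WithPiTopology

section
variable (R : Type*) [CommRing R]

noncomputable def signedDistinctGenFun : R⟦X⟧ :=
  Nat.Partition.genFun fun _ c ↦ if c = 1 then -1 else 0

theorem signedDistinctGenFun_eq_pentagonalSeries :
    signedDistinctGenFun R = pentagonalSeries R := by
  let : TopologicalSpace R := ⊥
  have : DiscreteTopology R := ⟨rfl⟩
  have hprod := Nat.Partition.hasProd_genFun fun _ c ↦ if c = 1 then (-1 : R) else 0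
  have hfactor (i : ℕ) : (1 : R⟦X⟧) + ∑' j, (if j + 1 = 1 then (-1 : R) else 0) •
      X ^ ((i + 1) * (j + 1)) = 1 - X ^ (i + 1) := by
    rw [tsum_eq_single 0 fun j hj ↦ by simp [hj]]
    simp [sub_eq_add_neg]
  simp only [hfactor] at hprod
  exact hprod.unique (WithPiTopology.hasProd_one_sub_X_pow R)

theorem prod_toFinsupp_signedDistinct {n : ℕ} (p : n.Partition) :
    p.parts.toFinsupp.prod (fun _ c ↦ if c = 1 then (-1 : R) else 0) =
      if p.parts.Nodup then (-1) ^ p.parts.card else 0 := by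
  simp only [Finsupp.prod, Multiset.toFinsupp_support, Multiset.toFinsupp_apply]
  split_ifs with hnd
  · rw [← Multiset.toFinset_card_of_nodup hnd]
    exact prod_eq_pow_card fun i hi ↦
      if_pos (Multiset.count_eq_one_of_mem hnd (Multiset.mem_toFinset.mp hi))
  · obtain ⟨i, hi⟩ : ∃ i, 1 < p.parts.count i := by
      simpa [Multiset.nodup_iff_count_le_one] using hnd
    exact prod_eq_zero (Multiset.mem_toFinset.mpr (Multiset.count_pos.mp (by omega)))
      (if_neg hi.ne')

theorem coeff_signedDistinctGenFun (n : ℕ) :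
    (signedDistinctGenFun R).coeff n =
      ∑ p : n.Partition, if p.parts.Nodup then (-1) ^ p.parts.card else 0 := by
  simp only [signedDistinctGenFun, Nat.Partition.coeff_genFun, prod_toFinsupp_signedDistinct]
end

theorem PE_sub_PO_eq_sum (n : ℕ) :
    (PE n : ℤ) - PO n =
      ∑ p : n.Partition, if p.parts.Nodup then (-1) ^ p.parts.card else 0 := by
  have hsign (p : n.Partition) : (if p.parts.Nodup then (-1 : ℤ) ^ p.parts.card else 0) =
      (if p.parts.Nodup ∧ Even p.parts.card then 1 else 0) -
        (if p.parts.Nodup ∧ Odd p.parts.card then 1 else 0) := by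
    by_cases hnd : p.parts.Nodup
    · rcases Nat.even_or_odd p.parts.card with h | h
      · simp [hnd, h, h.neg_one_pow, Nat.not_odd_iff_even.mpr h]
      · simp [hnd, h, h.neg_one_pow, Nat.not_even_iff_odd.mpr h]
    · simp [hnd]
  simp only [hsign, sum_sub_distrib, sum_boole, PE, PO, Set.ncard_eq_toFinset_card',
    Set.toFinset_ofPred]

theorem PE_sub_PO_eq_coeff_pentagonalSeries (n : ℕ) :
    (PE n : ℤ) - PO n = (pentagonalSeries ℤ).coeff n := by
  rw [PE_sub_PO_eq_sum, ← coeff_signedDistinctGenFun, signedDistinctGenFun_eq_pentagonalSeries]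

theorem pentagonal_natCast_eq_iff {m n : ℕ} : pentagonal m = n ↔ 2 * n = m * (3 * m - 1) := by
  have hp := two_mul_natCast_pentagonal m
  have hcast : ((m * (3 * m - 1) : ℕ) : ℤ) = m * (3 * m - 1) := by
    rcases m with _ | m
    · simp
    · push_cast [Nat.cast_sub (by omega : 1 ≤ 3 * (m + 1))]
      ring
  rw [← Nat.cast_inj (R := ℤ), ← Nat.cast_inj (R := ℤ) (m := 2 * n), hcast]
  push_cast
  constructor <;> intro h <;> linarith

theorem pentagonal_neg_natCast_eq_iff {m n : ℕ} :
    pentagonal (-m) = n ↔ 2 * n = m * (3 * m + 1) := by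
  have hp := two_mul_natCast_pentagonal_neg m
  rw [← Nat.cast_inj (R := ℤ), ← Nat.cast_inj (R := ℤ) (m := 2 * n)]
  push_cast
  constructor <;> intro h <;> linarith

theorem mem_range_pentagonal_iff {n : ℕ} (hn : 0 < n) : n ∈ Set.range pentagonal ↔
    ∃ m : ℕ, 0 < m ∧ (2 * n = m * (3 * m + 1) ∨ 2 * n = m * (3 * m - 1)) := by
  constructor
  · rintro ⟨k, hk⟩
    obtain ⟨m, rfl | rfl⟩ := Int.eq_nat_or_neg k
    · have h := pentagonal_natCast_eq_iff.mp hk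
      exact ⟨m, Nat.pos_of_ne_zero (by rintro rfl; omega), Or.inr h⟩
    · have h := pentagonal_neg_natCast_eq_iff.mp hk
      exact ⟨m, Nat.pos_of_ne_zero (by rintro rfl; omega), Or.inl h⟩
  · rintro ⟨m, -, hm | hm⟩
    · exact ⟨-m, pentagonal_neg_natCast_eq_iff.mpr hm⟩
    · exact ⟨m, pentagonal_natCast_eq_iff.mpr hm⟩

/-- Legendre's theorem: for every positive integer `n`, `PE n - PO n` equals
`(-1)^m` if `n = m(3m±1)/2` for some positive integer `m`, and `0` otherwise. -/
theorem legendre (n : ℕ) (hn : 0 < n) :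
    (∀ m : ℕ, 0 < m → (2 * n = m * (3 * m + 1) ∨ 2 * n = m * (3 * m - 1)) →
      (PE n : ℤ) - PO n = (-1 : ℤ) ^ m) ∧
    ((¬ ∃ m : ℕ, 0 < m ∧ (2 * n = m * (3 * m + 1) ∨ 2 * n = m * (3 * m - 1))) →
      PE n = PO n) := by
  rw [← mem_range_pentagonal_iff hn]
  refine ⟨fun m _ hm ↦ ?_, fun hnot ↦ ?_⟩
  · rw [PE_sub_PO_eq_coeff_pentagonalSeries]
    rcases hm with hm | hm
    · simp [← pentagonal_neg_natCast_eq_iff.mpr hm]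
    · simp [← pentagonal_natCast_eq_iff.mpr hm]
  · have := PE_sub_PO_eq_coeff_pentagonalSeries n
    rw [coeff_pentagonalSeries_eq_zero ℤ hnot] at this
    omega
end
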